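/- arXiv:2406.04001 — 2 statements merged into one kernel-verified Lean document; each statement's English description precedes it below -/
import Mathlib

section
/- Fix real matrices A ∈ ℝ^{n×n}, B₁ ∈ ℝ^{n×q}, B₂ ∈ ℝ^{n×m}, C₁ ∈ ℝ^{r×n}, C₂ ∈ ℝ^{p×n}, D₁₂ ∈ ℝ^{r×m}, D₂₁ ∈ ℝ^{p×q}. Let 𝒞₁ be a set of (2n+q)×(2n+q) real symmetric matrices and 𝒞₂ a set of (2n+r)×(2n+r) real symmetric matrices, each invariant under congruence: Tᵀ M T ∈ 𝒞ᵢ whenever M ∈ 𝒞ᵢ and T is invertible of the matching size. Let K = [0, C_K; B_K, A_K] ∈ ℝ^{(m+n)×(p+n)} be strictly proper (D_K = 0), γ ∈ ℝ, Γ an r×r symmetric matrix, and P a 2n×2n symmetric positive definite matrix with P₁₂ invertible. Set X = (P⁻¹)₁₁, Y = P₁₁, F = C_K(P⁻¹)₂₁, H = P₁₂B_K, M = Φ_M(K,P). Then: −[A_cl(K)ᵀP + P·A_cl(K), P·B_cl(K); B_cl(K)ᵀ·P, −γI_q] ∈ 𝒞₁ and [P, C_cl(K)ᵀ; C_cl(K),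 Γ] ∈ 𝒞₂ hold if and only if −𝒜(γ,F,H,M,X,Y) ∈ 𝒞₁ and ℬ(F,X,Y,Γ) ∈ 𝒞₂ hold. -/
/-! With `T = [(P⁻¹)₁₁, I; (P⁻¹)₂₁, 0]` one has `P T = [I, P₁₁; 0, P₂₁]`, so `T` is invertible
because `P₂₁ = P₁₂ᵀ` is, and `Tᵀ P A_cl T`, `Tᵀ P B_cl`, `C_cl T`, `Tᵀ P T` come out affine in
`(F, H, M, X, Y)`. Hence congruence by `diag(T, I)` carries each closed-loop matrix to the
corresponding matrix of `𝒜` or `ℬ`, and congruence invariance of `𝒞₁`, `𝒞₂` transfers membership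
both ways. -/

open Matrix

noncomputable section

/-- A 3×3 block matrix built from 9 blocks. -/
def blk3 {R : Type*} {i1 i2 i3 : Type*}
    (M11 : Matrix i1 i1 R) (M12 : Matrix i1 i2 R) (M13 : Matrix i1 i3 R)
    (M21 : Matrix i2 i1 R) (M22 : Matrix i2 i2 R) (M23 : Matrix i2 i3 R)
    (M31 : Matrix i3 i1 R) (M32 : Matrix i3 i2 R) (M33 : Matrix i3 i3 R) :
    Matrix ((i1 ⊕ i2) ⊕ i3) ((i1 ⊕ i2) ⊕ i3) R :=
  Matrix.fromBlocks (Matrix.fromBlocks M11 M12 M21 M22)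
    (Matrix.fromRows M13 M23) (Matrix.fromCols M31 M32) M33

/-- The mapping `Φ_M(K,P)` arising in output feedback ECL constructions. -/
def PhiM {n m p : ℕ} (A : Matrix (Fin n) (Fin n) ℝ) (B₂ : Matrix (Fin n) (Fin m) ℝ)
    (C₂ : Matrix (Fin p) (Fin n) ℝ)
    (K : Matrix (Fin m ⊕ Fin n) (Fin p ⊕ Fin n) ℝ)
    (P : Matrix (Fin n ⊕ Fin n) (Fin n ⊕ Fin n) ℝ) : Matrix (Fin n) (Fin n) ℝ :=
  P.toBlocks₁₂ * K.toBlocks₂₁ * C₂ * (P⁻¹).toBlocks₁₁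
    + P.toBlocks₁₁ * B₂ * K.toBlocks₁₂ * (P⁻¹).toBlocks₂₁
    + P.toBlocks₁₂ * K.toBlocks₂₂ * (P⁻¹).toBlocks₂₁
    + P.toBlocks₁₁ * (A + B₂ * K.toBlocks₁₁ * C₂) * (P⁻¹).toBlocks₁₁

namespace Matrix

section Blocks

variable {α l m n o p q : Type*} [NonUnitalNonAssocSemiring α] [Fintype l] [Fintype m]

theorem toBlocks₁₁_mul (P : Matrix (n ⊕ o) (l ⊕ m) α) (Q : Matrix (l ⊕ m) (p ⊕ q) α) :
    (P * Q).toBlocks₁₁ = P.toBlocks₁₁ * Q.toBlocks₁₁ + P.toBlocks₁₂ * Q.toBlocks₂₁ := by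
  ext i j
  simp [toBlocks₁₁, toBlocks₁₂, toBlocks₂₁, mul_apply, Fintype.sum_sum_type]

theorem toBlocks₂₁_mul (P : Matrix (n ⊕ o) (l ⊕ m) α) (Q : Matrix (l ⊕ m) (p ⊕ q) α) :
    (P * Q).toBlocks₂₁ = P.toBlocks₂₁ * Q.toBlocks₁₁ + P.toBlocks₂₂ * Q.toBlocks₂₁ := by
  ext i j
  simp [toBlocks₁₁, toBlocks₂₂, toBlocks₂₁, mul_apply, Fintype.sum_sum_type]

end Blocks

theorem IsSymm.toBlocks₁₁ {α l m : Type*} {P : Matrix (l ⊕ m) (l ⊕ m) α} (h : P.IsSymm) :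
    P.toBlocks₁₁.IsSymm :=
  congrArg Matrix.toBlocks₁₁ h

theorem IsSymm.transpose_toBlocks₂₁ {α l m : Type*} {P : Matrix (l ⊕ m) (l ⊕ m) α}
    (h : P.IsSymm) : P.toBlocks₂₁ᵀ = P.toBlocks₁₂ :=
  congrArg Matrix.toBlocks₁₂ h

variable {R : Type*} [CommRing R]

theorem transpose_mul_mul_mem_iff {ι : Type*} [Fintype ι] [DecidableEq ι]
    {𝒞 : Set (Matrix ι ι R)} (h𝒞 : ∀ M ∈ 𝒞, ∀ T : Matrix ι ι R, IsUnit T → Tᵀ * M * T ∈ 𝒞)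
    {T : Matrix ι ι R} (hT : IsUnit T) (M : Matrix ι ι R) : Tᵀ * M * T ∈ 𝒞 ↔ M ∈ 𝒞 := by
  refine ⟨fun h => ?_, fun h => h𝒞 M h T hT⟩
  obtain ⟨U, rfl⟩ := hT
  have hU : (↑U⁻¹ : Matrix ι ι R)ᵀ * (↑U)ᵀ = 1 := by
    rw [← transpose_mul, U.mul_inv, transpose_one]
  have := h𝒞 _ h _ (U⁻¹).isUnit
  rwa [← Matrix.mul_assoc, ← Matrix.mul_assoc, hU, Matrix.one_mul, Matrix.mul_assoc,
    U.mul_inv, Matrix.mul_one] at this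

theorem transpose_mul_fromBlocks_mul_diag {l m : Type*} [Fintype l] [Fintype m] [DecidableEq m]
    (T A : Matrix l l R) (B : Matrix l m R) (C : Matrix m l R) (D : Matrix m m R) :
    (fromBlocks T 0 0 1)ᵀ * fromBlocks A B C D * fromBlocks T 0 0 1 =
      fromBlocks (Tᵀ * A * T) (Tᵀ * B) (C * T) D := by
  simp [fromBlocks_transpose, fromBlocks_multiply]

section CongruenceFactor

variable {n : Type*} [Fintype n] [DecidableEq n] {P : Matrix (n ⊕ n) (n ⊕ n) R}

def congruenceFactor (P : Matrix (n ⊕ n) (n ⊕ n) R) : Matrix (n ⊕ n) (n ⊕ n) R :=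
  fromBlocks (P⁻¹).toBlocks₁₁ 1 (P⁻¹).toBlocks₂₁ 0

theorem toBlocks₁₁_mul_inv_add (hP : IsUnit P.det) :
    P.toBlocks₁₁ * (P⁻¹).toBlocks₁₁ + P.toBlocks₁₂ * (P⁻¹).toBlocks₂₁ = 1 := by
  rw [← toBlocks₁₁_mul, P.mul_nonsing_inv hP, ← fromBlocks_one, toBlocks_fromBlocks₁₁]

theorem toBlocks₂₁_mul_inv_add (hP : IsUnit P.det) :
    P.toBlocks₂₁ * (P⁻¹).toBlocks₁₁ + P.toBlocks₂₂ * (P⁻¹).toBlocks₂₁ = 0 := by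
  rw [← toBlocks₂₁_mul, P.mul_nonsing_inv hP, ← fromBlocks_one, toBlocks_fromBlocks₂₁]

theorem mul_congruenceFactor (hP : IsUnit P.det) :
    P * congruenceFactor P = fromBlocks 1 P.toBlocks₁₁ 0 P.toBlocks₂₁ := by
  nth_rw 1 [← fromBlocks_toBlocks P]
  rw [congruenceFactor, fromBlocks_multiply]
  simp [toBlocks₁₁_mul_inv_add hP, toBlocks₂₁_mul_inv_add hP]

theorem isUnit_congruenceFactor (hPs : P.IsSymm) (hP : IsUnit P.det)
    (hP₁₂ : IsUnit P.toBlocks₁₂) : IsUnit (congruenceFactor P) := by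
  have hP₂₁ : IsUnit P.toBlocks₂₁ := by
    rw [← isUnit_transpose, hPs.transpose_toBlocks₂₁]
    exact hP₁₂
  have hPT : IsUnit (P * congruenceFactor P) := by
    rw [mul_congruenceFactor hP, isUnit_fromBlocks_zero₂₁]
    exact ⟨isUnit_one, hP₂₁⟩
  rw [isUnit_iff_isUnit_det, det_mul] at hPT
  exact (isUnit_iff_isUnit_det _).mpr (isUnit_of_mul_isUnit_right hPT)

theorem transpose_congruenceFactor_mul (hPs : P.IsSymm) (hP : IsUnit P.det) :
    (congruenceFactor P)ᵀ * P = fromBlocks 1 0 P.toBlocks₁₁ P.toBlocks₁₂ := by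
  have hTP : (congruenceFactor P)ᵀ * P = (P * congruenceFactor P)ᵀ := by
    rw [transpose_mul, hPs.eq]
  rw [hTP, mul_congruenceFactor hP, fromBlocks_transpose, hPs.toBlocks₁₁.eq,
    hPs.transpose_toBlocks₂₁, transpose_one, transpose_zero]

theorem transpose_congruenceFactor_mul_mul_self (hPs : P.IsSymm) (hP : IsUnit P.det) :
    (congruenceFactor P)ᵀ * P * congruenceFactor P =
      fromBlocks (P⁻¹).toBlocks₁₁ 1 1 P.toBlocks₁₁ := by
  rw [transpose_congruenceFactor_mul hPs hP, congruenceFactor, fromBlocks_multiply,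
    toBlocks₁₁_mul_inv_add hP]
  simp

end CongruenceFactor

end Matrix

section ClosedLoop

variable {n m p q : ℕ} (A : Matrix (Fin n) (Fin n) ℝ) (B₁ : Matrix (Fin n) (Fin q) ℝ)
  (B₂ : Matrix (Fin n) (Fin m) ℝ) (C₂ : Matrix (Fin p) (Fin n) ℝ) (D₂₁ : Matrix (Fin p) (Fin q) ℝ)
  (CK : Matrix (Fin m) (Fin n) ℝ) (BK : Matrix (Fin n) (Fin p) ℝ) (AK : Matrix (Fin n) (Fin n) ℝ)
  {P : Matrix (Fin n ⊕ Fin n) (Fin n ⊕ Fin n) ℝ}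

theorem transpose_congruenceFactor_mul_mul_closedLoop (hPs : P.IsSymm) (hP : IsUnit P.det) :
    (congruenceFactor P)ᵀ * P * fromBlocks A (B₂ * CK) (BK * C₂) AK * congruenceFactor P =
      fromBlocks (A * (P⁻¹).toBlocks₁₁ + B₂ * (CK * (P⁻¹).toBlocks₂₁)) A
        (PhiM A B₂ C₂ (fromBlocks 0 CK BK AK) P) (P.toBlocks₁₁ * A + P.toBlocks₁₂ * BK * C₂) := by
  rw [transpose_congruenceFactor_mul hPs hP, congruenceFactor]
  simp only [fromBlocks_multiply, PhiM, toBlocks_fromBlocks₁₁, toBlocks_fromBlocks₁₂,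
    toBlocks_fromBlocks₂₁, toBlocks_fromBlocks₂₂]
  congr 1 <;> simp only [Matrix.mul_assoc, Matrix.add_mul, Matrix.mul_zero, Matrix.zero_mul,
    Matrix.one_mul, Matrix.mul_one, add_zero]
  abel

theorem transpose_congruenceFactor_mul_lyapunov (hPs : P.IsSymm) (hP : IsUnit P.det) :
    (congruenceFactor P)ᵀ * ((fromBlocks A (B₂ * CK) (BK * C₂) AK)ᵀ * P +
      P * fromBlocks A (B₂ * CK) (BK * C₂) AK) * congruenceFactor P =
      fromBlocks
        (A * (P⁻¹).toBlocks₁₁ + B₂ * (CK * (P⁻¹).toBlocks₂₁) +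
          (A * (P⁻¹).toBlocks₁₁ + B₂ * (CK * (P⁻¹).toBlocks₂₁))ᵀ)
        ((PhiM A B₂ C₂ (fromBlocks 0 CK BK AK) P)ᵀ + A)
        (((PhiM A B₂ C₂ (fromBlocks 0 CK BK AK) P)ᵀ + A)ᵀ)
        (P.toBlocks₁₁ * A + P.toBlocks₁₂ * BK * C₂ +
          (P.toBlocks₁₁ * A + P.toBlocks₁₂ * BK * C₂)ᵀ) := by
  set T := congruenceFactor P
  set Acl := fromBlocks A (B₂ * CK) (BK * C₂) AK
  have hsplit : Tᵀ * (Aclᵀ * P + P * Acl) * T = Tᵀ * P * Acl * T + (Tᵀ * P * Acl * T)ᵀ := by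
    simp only [transpose_mul, transpose_transpose, hPs.eq, Matrix.mul_add, Matrix.add_mul,
      Matrix.mul_assoc, add_comm]
  rw [hsplit, transpose_congruenceFactor_mul_mul_closedLoop A B₂ C₂ CK BK AK hPs hP,
    fromBlocks_transpose, fromBlocks_add]
  simp only [transpose_add, transpose_transpose, add_comm]

theorem transpose_congruenceFactor_mul_mul_input (hPs : P.IsSymm) (hP : IsUnit P.det) :
    (congruenceFactor P)ᵀ * (P * fromRows B₁ (BK * D₂₁)) =
      fromRows B₁ (P.toBlocks₁₁ * B₁ + P.toBlocks₁₂ * BK * D₂₁) := by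
  rw [← Matrix.mul_assoc, transpose_congruenceFactor_mul hPs hP, fromBlocks_mul_fromRows]
  simp [Matrix.mul_assoc]

end ClosedLoop

theorem lqg_congruence_lemma_general {n m p q r : ℕ}
    (A : Matrix (Fin n) (Fin n) ℝ) (B₁ : Matrix (Fin n) (Fin q) ℝ)
    (B₂ : Matrix (Fin n) (Fin m) ℝ) (C₁ : Matrix (Fin r) (Fin n) ℝ)
    (C₂ : Matrix (Fin p) (Fin n) ℝ) (D₁₂ : Matrix (Fin r) (Fin m) ℝ)
    (D₂₁ : Matrix (Fin p) (Fin q) ℝ)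
    (𝒞₁ : Set (Matrix ((Fin n ⊕ Fin n) ⊕ Fin q) ((Fin n ⊕ Fin n) ⊕ Fin q) ℝ))
    (𝒞₂ : Set (Matrix ((Fin n ⊕ Fin n) ⊕ Fin r) ((Fin n ⊕ Fin n) ⊕ Fin r) ℝ))
    (h𝒞₁ : ∀ M ∈ 𝒞₁, ∀ T : Matrix ((Fin n ⊕ Fin n) ⊕ Fin q) ((Fin n ⊕ Fin n) ⊕ Fin q) ℝ,
      IsUnit T → Tᵀ * M * T ∈ 𝒞₁)
    (h𝒞₂ : ∀ M ∈ 𝒞₂, ∀ T : Matrix ((Fin n ⊕ Fin n) ⊕ Fin r) ((Fin n ⊕ Fin n) ⊕ Fin r) ℝ,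
      IsUnit T → Tᵀ * M * T ∈ 𝒞₂)
    (CK : Matrix (Fin m) (Fin n) ℝ) (BK : Matrix (Fin n) (Fin p) ℝ)
    (AK : Matrix (Fin n) (Fin n) ℝ) (γ : ℝ)
    (Γ : Matrix (Fin r) (Fin r) ℝ)
    {P : Matrix (Fin n ⊕ Fin n) (Fin n ⊕ Fin n) ℝ}
    (hP : P.PosDef) (hP12 : IsUnit P.toBlocks₁₂) :
    (-(Matrix.fromBlocks
        ((Matrix.fromBlocks A (B₂ * CK) (BK * C₂) AK)ᵀ * P +
          P * Matrix.fromBlocks A (B₂ * CK) (BK * C₂) AK)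
        (P * Matrix.fromRows B₁ (BK * D₂₁))
        ((Matrix.fromRows B₁ (BK * D₂₁))ᵀ * P)
        (-(γ • (1 : Matrix (Fin q) (Fin q) ℝ)))) ∈ 𝒞₁ ∧
      Matrix.fromBlocks P (Matrix.fromCols C₁ (D₁₂ * CK))ᵀ
        (Matrix.fromCols C₁ (D₁₂ * CK)) Γ ∈ 𝒞₂) ↔
    (-(blk3
        (A * (P⁻¹).toBlocks₁₁ + B₂ * (CK * (P⁻¹).toBlocks₂₁) +
          (A * (P⁻¹).toBlocks₁₁ + B₂ * (CK * (P⁻¹).toBlocks₂₁))ᵀ)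
        ((PhiM A B₂ C₂ (Matrix.fromBlocks 0 CK BK AK) P)ᵀ + A)
        B₁
        (((PhiM A B₂ C₂ (Matrix.fromBlocks 0 CK BK AK) P)ᵀ + A)ᵀ)
        (P.toBlocks₁₁ * A + (P.toBlocks₁₂ * BK) * C₂ +
          (P.toBlocks₁₁ * A + (P.toBlocks₁₂ * BK) * C₂)ᵀ)
        (P.toBlocks₁₁ * B₁ + (P.toBlocks₁₂ * BK) * D₂₁)
        B₁ᵀ
        ((P.toBlocks₁₁ * B₁ + (P.toBlocks₁₂ * BK) * D₂₁)ᵀ)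
        (-(γ • (1 : Matrix (Fin q) (Fin q) ℝ)))) ∈ 𝒞₁ ∧
      blk3
        ((P⁻¹).toBlocks₁₁) (1 : Matrix (Fin n) (Fin n) ℝ)
        ((C₁ * (P⁻¹).toBlocks₁₁ + D₁₂ * (CK * (P⁻¹).toBlocks₂₁))ᵀ)
        (1 : Matrix (Fin n) (Fin n) ℝ) (P.toBlocks₁₁) C₁ᵀ
        (C₁ * (P⁻¹).toBlocks₁₁ + D₁₂ * (CK * (P⁻¹).toBlocks₂₁)) C₁ Γ ∈ 𝒞₂) := by
  have hPs : P.IsSymm := isHermitian_iff_isSymm.mp hP.isHermitian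
  have hPdet : IsUnit P.det := (isUnit_iff_isUnit_det P).mp hP.isUnit
  have hT : IsUnit (congruenceFactor P) := isUnit_congruenceFactor hPs hPdet hP12
  have hBPT : (fromRows B₁ (BK * D₂₁))ᵀ * P * congruenceFactor P =
      ((congruenceFactor P)ᵀ * (P * fromRows B₁ (BK * D₂₁)))ᵀ := by
    rw [transpose_mul, transpose_mul, transpose_transpose, hPs.eq, Matrix.mul_assoc]
  have hCT : fromCols C₁ (D₁₂ * CK) * congruenceFactor P =
      fromCols (C₁ * (P⁻¹).toBlocks₁₁ + D₁₂ * (CK * (P⁻¹).toBlocks₂₁)) C₁ := by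
    simp [congruenceFactor, fromCols_mul_fromBlocks, Matrix.mul_assoc]
  refine and_congr ?_ ?_
  · rw [← transpose_mul_mul_mem_iff h𝒞₁ (isUnit_fromBlocks_zero₂₁.mpr ⟨hT, isUnit_one⟩),
      Matrix.mul_neg, Matrix.neg_mul, transpose_mul_fromBlocks_mul_diag,
      transpose_congruenceFactor_mul_lyapunov A B₂ C₂ CK BK AK hPs hPdet, hBPT,
      transpose_congruenceFactor_mul_mul_input B₁ D₂₁ BK hPs hPdet,
      transpose_fromRows, blk3]
  · rw [← transpose_mul_mul_mem_iff h𝒞₂ (isUnit_fromBlocks_zero₂₁.mpr ⟨hT, isUnit_one⟩),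
      transpose_mul_fromBlocks_mul_diag, transpose_congruenceFactor_mul_mul_self hPs hPdet,
      ← transpose_mul, hCT, transpose_fromCols, blk3]

/-- **Lemma D.5 (LQG congruence lemma)**: for congruence-invariant classes
`𝒞₁, 𝒞₂` of symmetric matrices, a strictly proper policy `K = [0, C_K; B_K, A_K]`,
scalar `γ`, symmetric `Γ`, and `P ≻ 0` with `P₁₂` invertible, the pair of LMI
membership conditions in the policy variables `(K, P)` holds if and only if the
corresponding pair for the affine operators `𝒜, ℬ` in the transformed variables
`(F, H, M, X, Y) = (C_K(P⁻¹)₂₁, P₁₂B_K, Φ_M(K,P), (P⁻¹)₁₁, P₁₁)` holds. -/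
theorem lqg_congruence_lemma {n m p q r : ℕ}
    (A : Matrix (Fin n) (Fin n) ℝ) (B₁ : Matrix (Fin n) (Fin q) ℝ)
    (B₂ : Matrix (Fin n) (Fin m) ℝ) (C₁ : Matrix (Fin r) (Fin n) ℝ)
    (C₂ : Matrix (Fin p) (Fin n) ℝ) (D₁₂ : Matrix (Fin r) (Fin m) ℝ)
    (D₂₁ : Matrix (Fin p) (Fin q) ℝ)
    (𝒞₁ : Set (Matrix ((Fin n ⊕ Fin n) ⊕ Fin q) ((Fin n ⊕ Fin n) ⊕ Fin q) ℝ))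
    (𝒞₂ : Set (Matrix ((Fin n ⊕ Fin n) ⊕ Fin r) ((Fin n ⊕ Fin n) ⊕ Fin r) ℝ))
    (h𝒞₁sym : ∀ M ∈ 𝒞₁, M.IsSymm) (h𝒞₂sym : ∀ M ∈ 𝒞₂, M.IsSymm)
    (h𝒞₁ : ∀ M ∈ 𝒞₁, ∀ T : Matrix ((Fin n ⊕ Fin n) ⊕ Fin q) ((Fin n ⊕ Fin n) ⊕ Fin q) ℝ,
      IsUnit T → Tᵀ * M * T ∈ 𝒞₁)
    (h𝒞₂ : ∀ M ∈ 𝒞₂, ∀ T : Matrix ((Fin n ⊕ Fin n) ⊕ Fin r) ((Fin n ⊕ Fin n) ⊕ Fin r) ℝ,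
      IsUnit T → Tᵀ * M * T ∈ 𝒞₂)
    (CK : Matrix (Fin m) (Fin n) ℝ) (BK : Matrix (Fin n) (Fin p) ℝ)
    (AK : Matrix (Fin n) (Fin n) ℝ) (γ : ℝ)
    (Γ : Matrix (Fin r) (Fin r) ℝ) (hΓ : Γ.IsSymm)
    {P : Matrix (Fin n ⊕ Fin n) (Fin n ⊕ Fin n) ℝ}
    (hP : P.PosDef) (hP12 : IsUnit P.toBlocks₁₂) :
    (-(Matrix.fromBlocks
        ((Matrix.fromBlocks A (B₂ * CK) (BK * C₂) AK)ᵀ * P +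
          P * Matrix.fromBlocks A (B₂ * CK) (BK * C₂) AK)
        (P * Matrix.fromRows B₁ (BK * D₂₁))
        ((Matrix.fromRows B₁ (BK * D₂₁))ᵀ * P)
        (-(γ • (1 : Matrix (Fin q) (Fin q) ℝ)))) ∈ 𝒞₁ ∧
      Matrix.fromBlocks P (Matrix.fromCols C₁ (D₁₂ * CK))ᵀ
        (Matrix.fromCols C₁ (D₁₂ * CK)) Γ ∈ 𝒞₂) ↔
    (-(blk3
        (A * (P⁻¹).toBlocks₁₁ + B₂ * (CK * (P⁻¹).toBlocks₂₁) +
          (A * (P⁻¹).toBlocks₁₁ + B₂ * (CK * (P⁻¹).toBlocks₂₁))ᵀ)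
        ((PhiM A B₂ C₂ (Matrix.fromBlocks 0 CK BK AK) P)ᵀ + A)
        B₁
        (((PhiM A B₂ C₂ (Matrix.fromBlocks 0 CK BK AK) P)ᵀ + A)ᵀ)
        (P.toBlocks₁₁ * A + (P.toBlocks₁₂ * BK) * C₂ +
          (P.toBlocks₁₁ * A + (P.toBlocks₁₂ * BK) * C₂)ᵀ)
        (P.toBlocks₁₁ * B₁ + (P.toBlocks₁₂ * BK) * D₂₁)
        B₁ᵀ
        ((P.toBlocks₁₁ * B₁ + (P.toBlocks₁₂ * BK) * D₂₁)ᵀ)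
        (-(γ • (1 : Matrix (Fin q) (Fin q) ℝ)))) ∈ 𝒞₁ ∧
      blk3
        ((P⁻¹).toBlocks₁₁) (1 : Matrix (Fin n) (Fin n) ℝ)
        ((C₁ * (P⁻¹).toBlocks₁₁ + D₁₂ * (CK * (P⁻¹).toBlocks₂₁))ᵀ)
        (1 : Matrix (Fin n) (Fin n) ℝ) (P.toBlocks₁₁) C₁ᵀ
        (C₁ * (P⁻¹).toBlocks₁₁ + D₁₂ * (CK * (P⁻¹).toBlocks₂₁)) C₁ Γ ∈ 𝒞₂) :=
  lqg_congruence_lemma_general A B₁ B₂ C₁ C₂ D₁₂ D₂₁ 𝒞₁ 𝒞₂ h𝒞₁ h𝒞₂ CK BK AK γ Γ hP hP12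
end
end

section
/- Fix real matrices A ∈ ℝ^{n×n}, B₂ ∈ ℝ^{n×m}, C₂ ∈ ℝ^{p×n} and an integer r ≥ 1. Define L⁰ = {(K,γ,P,Γ) : K ∈ ℝ^{(m+n)×(p+n)} with top-left m×p block D_K = 0, γ ∈ ℝ, P a 2n×2n symmetric positive definite matrix with P₁₂ invertible, Γ an r×r symmetric matrix} and F⁰ = {(γ,Λ,X,Y,Γ) : γ ∈ ℝ, Λ ∈ ℝ^{(m+n)×(p+n)} with top-left m×p block zero, X and Y n×n symmetric with [X, I; I, Y] ≻ 0, Γ an r×r symmetric matrix}. Then the map Φ(K,γ,P,Γ) = (γ, Φ_Λ(K,P), (P⁻¹)₁₁, P₁₁, Γ, P₁₂) is a bijection from L⁰ onto F⁰ × GLₙ(ℝ), with inverse given by (γ,Λ,X,Y,Γ,Ξ) ↦ (Ψ_K(Λ,X,Y,Ξ), γ, Ψ_P(X,Y,Ξ), Γ). -/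
open Matrix

noncomputable section

/-- The mapping `Φ_Λ(K,P)` arising in output feedback ECL constructions. -/
def PhiLam {n m p : ℕ} (A : Matrix (Fin n) (Fin n) ℝ) (B₂ : Matrix (Fin n) (Fin m) ℝ)
    (C₂ : Matrix (Fin p) (Fin n) ℝ)
    (K : Matrix (Fin m ⊕ Fin n) (Fin p ⊕ Fin n) ℝ)
    (P : Matrix (Fin n ⊕ Fin n) (Fin n ⊕ Fin n) ℝ) :
    Matrix (Fin m ⊕ Fin n) (Fin p ⊕ Fin n) ℝ :=
  Matrix.fromBlocks K.toBlocks₁₁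
    (K.toBlocks₁₁ * C₂ * (P⁻¹).toBlocks₁₁ + K.toBlocks₁₂ * (P⁻¹).toBlocks₂₁)
    (P.toBlocks₁₁ * B₂ * K.toBlocks₁₁ + P.toBlocks₁₂ * K.toBlocks₂₁)
    (PhiM A B₂ C₂ K P)

/-- The mapping `Ψ_K(Λ,X,Y,Ξ)` arising in output feedback ECL constructions. -/
def PsiK {n m p : ℕ} (A : Matrix (Fin n) (Fin n) ℝ) (B₂ : Matrix (Fin n) (Fin m) ℝ)
    (C₂ : Matrix (Fin p) (Fin n) ℝ)
    (Λ : Matrix (Fin m ⊕ Fin n) (Fin p ⊕ Fin n) ℝ)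
    (X Y Ξ : Matrix (Fin n) (Fin n) ℝ) :
    Matrix (Fin m ⊕ Fin n) (Fin p ⊕ Fin n) ℝ :=
  (Matrix.fromBlocks (1 : Matrix (Fin m) (Fin m) ℝ) 0 (Y * B₂) Ξ)⁻¹
    * (Λ - Matrix.fromBlocks 0 0 0 (Y * A * X))
    * (Matrix.fromBlocks (1 : Matrix (Fin p) (Fin p) ℝ) (C₂ * X) 0
        (-(Ξ⁻¹ * (Y - X⁻¹) * X)))⁻¹

/-- The mapping `Ψ_P(X,Y,Ξ)` arising in output feedback ECL constructions. -/
def PsiP {n : ℕ} (X Y Ξ : Matrix (Fin n) (Fin n) ℝ) :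
    Matrix (Fin n ⊕ Fin n) (Fin n ⊕ Fin n) ℝ :=
  Matrix.fromBlocks Y Ξ Ξᵀ (Ξᵀ * (Y - X⁻¹)⁻¹ * Ξ)

/-- The set `L⁰` for the LQG ECL: strictly proper policies `K` (top-left
block `D_K = 0`), `γ ∈ ℝ`, `P ≻ 0` with `P₁₂` invertible, and symmetric `Γ`. -/
def LQGLiftedZero (n m p r : ℕ) :
    Set (Matrix (Fin m ⊕ Fin n) (Fin p ⊕ Fin n) ℝ × ℝ ×
      Matrix (Fin n ⊕ Fin n) (Fin n ⊕ Fin n) ℝ × Matrix (Fin r) (Fin r) ℝ) :=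
  {t | t.1.toBlocks₁₁ = 0 ∧ t.2.2.1.PosDef ∧ IsUnit t.2.2.1.toBlocks₁₂ ∧
    t.2.2.2.IsSymm}

/-- The set `F⁰ × GLₙ(ℝ)` for the LQG ECL: `(γ, Λ, X, Y, Γ, Ξ)` with the
top-left block of `Λ` zero, `X, Y` symmetric with `[X, I; I, Y] ≻ 0`, `Γ`
symmetric, and `Ξ` invertible. -/
def LQGCvxZeroTimesGL (n m p r : ℕ) :
    Set (ℝ × Matrix (Fin m ⊕ Fin n) (Fin p ⊕ Fin n) ℝ ×
      Matrix (Fin n) (Fin n) ℝ × Matrix (Fin n) (Fin n) ℝ ×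
      Matrix (Fin r) (Fin r) ℝ × Matrix (Fin n) (Fin n) ℝ) :=
  {s | s.2.1.toBlocks₁₁ = 0 ∧ s.2.2.1.IsSymm ∧ s.2.2.2.1.IsSymm ∧
    (Matrix.fromBlocks s.2.2.1 (1 : Matrix (Fin n) (Fin n) ℝ)
      (1 : Matrix (Fin n) (Fin n) ℝ) s.2.2.2.1).PosDef ∧
    s.2.2.2.2.1.IsSymm ∧ IsUnit s.2.2.2.2.2}

/-!
Write a positive definite `P` with invertible `Ξ = P₁₂` as `[Y, Ξ; Ξᵀ, W]`. Its Schur complement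
`Y - Ξ W⁻¹ Ξᵀ` is `X⁻¹` for `X = (P⁻¹)₁₁`, hence `W = Ξᵀ (Y - X⁻¹)⁻¹ Ξ` and
`P = Ψ_P(X, Y, Ξ)`; by the Schur complement criterion, `P ≻ 0` and `[X, I; I, Y] ≻ 0` both amount
to `X ≻ 0` and `Y - X⁻¹ ≻ 0`. For `P = Ψ_P(X, Y, Ξ)` one also has
`(P⁻¹)₂₁ = -Ξ⁻¹ (Y - X⁻¹) X`, so `Φ_Λ(K, P) = M K R + [0, 0; 0, Y A X]` with the invertible
block-triangular matrices `M = [I, 0; Y B₂, Ξ]` and `R = [I, C₂ X; 0, -Ξ⁻¹ (Y - X⁻¹) X]`,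
and `Ψ_K` is exactly the inverse of this affine map.
-/

namespace Matrix

open scoped ComplexOrder

variable {l q : Type*} [Fintype l] [Fintype q] [DecidableEq l] [DecidableEq q]
  {𝕜 : Type*} [RCLike 𝕜]

theorem posDef_fromBlocks₁₁_iff {A : Matrix l l 𝕜} (B : Matrix l q 𝕜) (D : Matrix q q 𝕜)
    (hA : A.PosDef) :
    (fromBlocks A B Bᴴ D).PosDef ↔ (D - Bᴴ * A⁻¹ * B).PosDef := by
  have := hA.isUnit.invertible
  have hdet := det_fromBlocks₁₁ A B Bᴴ D
  rw [invOf_eq_nonsing_inv] at hdet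
  constructor
  · intro h
    rw [((PosDef.fromBlocks₁₁ B D hA).mp h.posSemidef).posDef_iff_det_ne_zero]
    exact right_ne_zero_of_mul (hdet ▸ h.det_pos.ne')
  · intro h
    rw [((PosDef.fromBlocks₁₁ B D hA).mpr h.posSemidef).posDef_iff_det_ne_zero, hdet]
    exact mul_ne_zero hA.det_pos.ne' h.det_pos.ne'

theorem posDef_fromBlocks₂₂_iff (A : Matrix l l 𝕜) (B : Matrix l q 𝕜) {D : Matrix q q 𝕜}
    (hD : D.PosDef) :
    (fromBlocks A B Bᴴ D).PosDef ↔ (A - B * D⁻¹ * Bᴴ).PosDef := by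
  have := hD.isUnit.invertible
  have hdet := det_fromBlocks₂₂ A B Bᴴ D
  rw [invOf_eq_nonsing_inv] at hdet
  constructor
  · intro h
    rw [((PosDef.fromBlocks₂₂ A B hD).mp h.posSemidef).posDef_iff_det_ne_zero]
    exact right_ne_zero_of_mul (hdet ▸ h.det_pos.ne')
  · intro h
    rw [((PosDef.fromBlocks₂₂ A B hD).mpr h.posSemidef).posDef_iff_det_ne_zero, hdet]
    exact mul_ne_zero hD.det_pos.ne' h.det_pos.ne'

theorem posDef_fromBlocks_one_iff {X Y : Matrix l l 𝕜} :
    (fromBlocks X 1 1 Y).PosDef ↔ X.PosDef ∧ (Y - X⁻¹).PosDef := by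
  refine ⟨fun h => ?_, fun ⟨hX, hZ⟩ => ?_⟩
  · have hX : X.PosDef := h.submatrix Sum.inl_injective
    exact ⟨hX, by simpa using (posDef_fromBlocks₁₁_iff 1 Y hX).mp (by simpa using h)⟩
  · simpa using (posDef_fromBlocks₁₁_iff 1 Y hX).mpr (by simpa using hZ)

variable {α : Type*} [CommRing α]

theorem mul_inv_mul_mul_inv_mul {U V W : Matrix l l α} (hU : IsUnit U) (hV : IsUnit V)
    (hW : IsUnit W) : V * (U * W⁻¹ * V)⁻¹ * U = W := by
  rw [isUnit_iff_isUnit_det] at hU hV hW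
  rw [Matrix.mul_inv_rev, Matrix.mul_inv_rev, nonsing_inv_nonsing_inv W hW,
    mul_nonsing_inv_cancel_left _ _ hV, nonsing_inv_mul_cancel_right _ _ hU]

theorem inv_mul_mul_mul_inv {M : Matrix l l α} {R : Matrix q q α} (hM : IsUnit M)
    (hR : IsUnit R) (K : Matrix l q α) : M⁻¹ * (M * K * R) * R⁻¹ = K := by
  rw [isUnit_iff_isUnit_det] at hM hR
  rw [← Matrix.mul_assoc, nonsing_inv_mul_cancel_left _ _ hM, mul_nonsing_inv_cancel_right _ _ hR]

theorem mul_mul_inv_mul_inv_mul {M : Matrix l l α} {R : Matrix q q α} (hM : IsUnit M)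
    (hR : IsUnit R) (L : Matrix l q α) : M * (M⁻¹ * L * R⁻¹) * R = L := by
  rw [isUnit_iff_isUnit_det] at hM hR
  rw [← Matrix.mul_assoc, mul_nonsing_inv_cancel_left _ _ hM, nonsing_inv_mul_cancel_right _ _ hR]

theorem inv_fromBlocks_of_isUnit₂₂ {A : Matrix l l α} {B : Matrix l q α} {C : Matrix q l α}
    {D : Matrix q q α} (hD : IsUnit D) (hS : IsUnit (A - B * D⁻¹ * C)) :
    (fromBlocks A B C D)⁻¹ =
      fromBlocks (A - B * D⁻¹ * C)⁻¹ (-((A - B * D⁻¹ * C)⁻¹ * B * D⁻¹))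
        (-(D⁻¹ * C * (A - B * D⁻¹ * C)⁻¹))
        (D⁻¹ + D⁻¹ * C * (A - B * D⁻¹ * C)⁻¹ * B * D⁻¹) := by
  have := hD.invertible
  have : Invertible (A - B * ⅟D * C) := by rw [invOf_eq_nonsing_inv]; exact hS.invertible
  have := fromBlocks₂₂Invertible A B C D
  rw [← invOf_eq_nonsing_inv, invOf_fromBlocks₂₂_eq]
  simp only [invOf_eq_nonsing_inv]

end Matrix

theorem Matrix.isSymm_of_posDef_fromBlocks {l q R : Type*} [Ring R] [PartialOrder R] [StarRing R]
    [TrivialStar R] {A : Matrix l l R} {B : Matrix l q R} {C : Matrix q l R} {D : Matrix q q R}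
    (h : (fromBlocks A B C D).PosDef) : A.IsSymm ∧ D.IsSymm := by
  obtain ⟨hA, -, -, hD⟩ := isHermitian_fromBlocks_iff.mp h.isHermitian
  exact ⟨isHermitian_iff_isSymm.mp hA, isHermitian_iff_isSymm.mp hD⟩

section PsiP

variable {n : ℕ} {X Y Ξ : Matrix (Fin n) (Fin n) ℝ}

theorem psiP_toBlocks₁₁ : (PsiP X Y Ξ).toBlocks₁₁ = Y := rfl

theorem psiP_toBlocks₁₂ : (PsiP X Y Ξ).toBlocks₁₂ = Ξ := rfl

theorem psiP_schur (hZ : IsUnit (Y - X⁻¹)) (hΞ : IsUnit Ξ) :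
    Y - Ξ * (Ξᵀ * (Y - X⁻¹)⁻¹ * Ξ)⁻¹ * Ξᵀ = X⁻¹ := by
  rw [mul_inv_mul_mul_inv_mul ((isUnit_transpose Ξ).mpr hΞ) hΞ hZ, sub_sub_cancel]

theorem inv_psiP_toBlocks (hX : IsUnit X) (hZ : IsUnit (Y - X⁻¹)) (hΞ : IsUnit Ξ) :
    ((PsiP X Y Ξ)⁻¹).toBlocks₁₁ = X ∧
      ((PsiP X Y Ξ)⁻¹).toBlocks₂₁ = -(Ξ⁻¹ * (Y - X⁻¹) * X) := by
  have hW : IsUnit (Ξᵀ * (Y - X⁻¹)⁻¹ * Ξ) :=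
    (((isUnit_transpose Ξ).mpr hΞ).mul (isUnit_nonsing_inv_iff.mpr hZ)).mul hΞ
  have hΞt := (isUnit_iff_isUnit_det _).mp ((isUnit_transpose Ξ).mpr hΞ)
  rw [PsiP, inv_fromBlocks_of_isUnit₂₂ hW (by rwa [psiP_schur hZ hΞ, isUnit_nonsing_inv_iff]),
    psiP_schur hZ hΞ, nonsing_inv_nonsing_inv _ ((isUnit_iff_isUnit_det _).mp hX),
    toBlocks_fromBlocks₁₁, toBlocks_fromBlocks₂₁, Matrix.mul_inv_rev, Matrix.mul_inv_rev,
    nonsing_inv_nonsing_inv _ ((isUnit_iff_isUnit_det _).mp hZ)]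
  refine ⟨rfl, ?_⟩
  simp only [Matrix.mul_assoc, nonsing_inv_mul_cancel_left _ _ hΞt]

theorem posDef_psiP (hX : X.PosDef) (hZ : (Y - X⁻¹).PosDef) (hΞ : IsUnit Ξ) :
    (PsiP X Y Ξ).PosDef := by
  rw [PsiP, ← conjTranspose_eq_transpose_of_trivial]
  have hW : (Ξᴴ * (Y - X⁻¹)⁻¹ * Ξ).PosDef :=
    (IsUnit.posDef_star_left_conjugate_iff hΞ).mpr hZ.inv
  rw [posDef_fromBlocks₂₂_iff _ _ hW, conjTranspose_eq_transpose_of_trivial,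
    psiP_schur hZ.isUnit hΞ]
  exact hX.inv

theorem exists_eq_psiP {P : Matrix (Fin n ⊕ Fin n) (Fin n ⊕ Fin n) ℝ} (hP : P.PosDef)
    (hΞ : IsUnit P.toBlocks₁₂) :
    ∃ X Y Ξ, P = PsiP X Y Ξ ∧ (fromBlocks X 1 1 Y).PosDef ∧ IsUnit Ξ := by
  set Ξ := P.toBlocks₁₂
  have hW : P.toBlocks₂₂.PosDef := hP.submatrix Sum.inr_injective
  have hP_eq : P = fromBlocks P.toBlocks₁₁ Ξ Ξᴴ P.toBlocks₂₂ := by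
    have hsymm := hP.isHermitian
    rw [← fromBlocks_toBlocks P, isHermitian_fromBlocks_iff] at hsymm
    rw [hsymm.2.1, fromBlocks_toBlocks]
  set Y := P.toBlocks₁₁
  set W := P.toBlocks₂₂
  have hS : (Y - Ξ * W⁻¹ * Ξᴴ).PosDef := (posDef_fromBlocks₂₂_iff Y Ξ hW).mp (hP_eq ▸ hP)
  rw [conjTranspose_eq_transpose_of_trivial] at hP_eq hS
  have hZ : Y - (Y - Ξ * W⁻¹ * Ξᵀ)⁻¹⁻¹ = Ξ * W⁻¹ * Ξᵀ := by
    rw [nonsing_inv_nonsing_inv _ ((isUnit_iff_isUnit_det _).mp hS.isUnit), sub_sub_cancel]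
  refine ⟨(Y - Ξ * W⁻¹ * Ξᵀ)⁻¹, Y, Ξ, ?_, posDef_fromBlocks_one_iff.mpr ⟨hS.inv, ?_⟩, hΞ⟩
  · rw [PsiP, hZ, mul_inv_mul_mul_inv_mul hΞ ((isUnit_transpose Ξ).mpr hΞ) hW.isUnit]
    exact hP_eq
  · rw [hZ, ← conjTranspose_eq_transpose_of_trivial]
    exact (IsUnit.posDef_star_right_conjugate_iff hΞ).mpr hW.inv

end PsiP

section Factorization

variable {n m p : ℕ} (A : Matrix (Fin n) (Fin n) ℝ) (B₂ : Matrix (Fin n) (Fin m) ℝ)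
  (C₂ : Matrix (Fin p) (Fin n) ℝ)

theorem phiLam_eq_mul_add (K : Matrix (Fin m ⊕ Fin n) (Fin p ⊕ Fin n) ℝ)
    (P : Matrix (Fin n ⊕ Fin n) (Fin n ⊕ Fin n) ℝ) :
    PhiLam A B₂ C₂ K P =
      fromBlocks 1 0 (P.toBlocks₁₁ * B₂) P.toBlocks₁₂ * K *
          fromBlocks 1 (C₂ * (P⁻¹).toBlocks₁₁) 0 (P⁻¹).toBlocks₂₁ +
        fromBlocks 0 0 0 (P.toBlocks₁₁ * A * (P⁻¹).toBlocks₁₁) := by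
  conv_rhs => rw [← fromBlocks_toBlocks K]
  rw [fromBlocks_multiply, fromBlocks_multiply, fromBlocks_add, PhiLam, PhiM, fromBlocks_inj]
  refine ⟨?_, ?_, ?_, ?_⟩ <;>
    simp only [Matrix.add_mul, Matrix.mul_add, Matrix.mul_assoc, Matrix.one_mul,
      Matrix.mul_one, Matrix.zero_mul, Matrix.mul_zero, add_zero]
  abel

theorem phiLam_toBlocks₁₁ (K : Matrix (Fin m ⊕ Fin n) (Fin p ⊕ Fin n) ℝ)
    (P : Matrix (Fin n ⊕ Fin n) (Fin n ⊕ Fin n) ℝ) :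
    (PhiLam A B₂ C₂ K P).toBlocks₁₁ = K.toBlocks₁₁ :=
  toBlocks_fromBlocks₁₁ _ _ _ _

variable {X Y Ξ : Matrix (Fin n) (Fin n) ℝ}

theorem phiLam_psiP (hX : IsUnit X) (hZ : IsUnit (Y - X⁻¹)) (hΞ : IsUnit Ξ)
    (K : Matrix (Fin m ⊕ Fin n) (Fin p ⊕ Fin n) ℝ) :
    PhiLam A B₂ C₂ K (PsiP X Y Ξ) =
      fromBlocks 1 0 (Y * B₂) Ξ * K * fromBlocks 1 (C₂ * X) 0 (-(Ξ⁻¹ * (Y - X⁻¹) * X)) +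
        fromBlocks 0 0 0 (Y * A * X) := by
  obtain ⟨h₁₁, h₂₁⟩ := inv_psiP_toBlocks hX hZ hΞ
  rw [phiLam_eq_mul_add, h₁₁, h₂₁, psiP_toBlocks₁₁, psiP_toBlocks₁₂]

theorem isUnit_fromBlocks_psiK (hX : IsUnit X) (hZ : IsUnit (Y - X⁻¹)) (hΞ : IsUnit Ξ) :
    IsUnit (fromBlocks (1 : Matrix (Fin m) (Fin m) ℝ) 0 (Y * B₂) Ξ) ∧
      IsUnit (fromBlocks (1 : Matrix (Fin p) (Fin p) ℝ) (C₂ * X) 0 (-(Ξ⁻¹ * (Y - X⁻¹) * X))) :=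
  ⟨isUnit_fromBlocks_zero₁₂.mpr ⟨isUnit_one, hΞ⟩, isUnit_fromBlocks_zero₂₁.mpr
    ⟨isUnit_one, (((isUnit_nonsing_inv_iff.mpr hΞ).mul hZ).mul hX).neg⟩⟩

theorem psiK_phiLam_psiP (hX : IsUnit X) (hZ : IsUnit (Y - X⁻¹)) (hΞ : IsUnit Ξ)
    (K : Matrix (Fin m ⊕ Fin n) (Fin p ⊕ Fin n) ℝ) :
    PsiK A B₂ C₂ (PhiLam A B₂ C₂ K (PsiP X Y Ξ)) X Y Ξ = K := by
  obtain ⟨hM, hR⟩ := isUnit_fromBlocks_psiK B₂ C₂ hX hZ hΞ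
  rw [PsiK, phiLam_psiP A B₂ C₂ hX hZ hΞ, add_sub_cancel_right, inv_mul_mul_mul_inv hM hR]

theorem phiLam_psiK_psiP (hX : IsUnit X) (hZ : IsUnit (Y - X⁻¹)) (hΞ : IsUnit Ξ)
    (Λ : Matrix (Fin m ⊕ Fin n) (Fin p ⊕ Fin n) ℝ) :
    PhiLam A B₂ C₂ (PsiK A B₂ C₂ Λ X Y Ξ) (PsiP X Y Ξ) = Λ := by
  obtain ⟨hM, hR⟩ := isUnit_fromBlocks_psiK B₂ C₂ hX hZ hΞ
  rw [phiLam_psiP A B₂ C₂ hX hZ hΞ, PsiK, mul_mul_inv_mul_inv_mul hM hR, sub_add_cancel]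

end Factorization

section Parameterization

variable {n m p r : ℕ} (A : Matrix (Fin n) (Fin n) ℝ) (B₂ : Matrix (Fin n) (Fin m) ℝ)
  (C₂ : Matrix (Fin p) (Fin n) ℝ)

def lqgParam (t : Matrix (Fin m ⊕ Fin n) (Fin p ⊕ Fin n) ℝ × ℝ ×
    Matrix (Fin n ⊕ Fin n) (Fin n ⊕ Fin n) ℝ × Matrix (Fin r) (Fin r) ℝ) :
    ℝ × Matrix (Fin m ⊕ Fin n) (Fin p ⊕ Fin n) ℝ × Matrix (Fin n) (Fin n) ℝ ×
      Matrix (Fin n) (Fin n) ℝ × Matrix (Fin r) (Fin r) ℝ × Matrix (Fin n) (Fin n) ℝ :=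
  (t.2.1, PhiLam A B₂ C₂ t.1 t.2.2.1, (t.2.2.1⁻¹).toBlocks₁₁, t.2.2.1.toBlocks₁₁, t.2.2.2,
    t.2.2.1.toBlocks₁₂)

def lqgParamInv (s : ℝ × Matrix (Fin m ⊕ Fin n) (Fin p ⊕ Fin n) ℝ × Matrix (Fin n) (Fin n) ℝ ×
    Matrix (Fin n) (Fin n) ℝ × Matrix (Fin r) (Fin r) ℝ × Matrix (Fin n) (Fin n) ℝ) :
    Matrix (Fin m ⊕ Fin n) (Fin p ⊕ Fin n) ℝ × ℝ ×
      Matrix (Fin n ⊕ Fin n) (Fin n ⊕ Fin n) ℝ × Matrix (Fin r) (Fin r) ℝ :=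
  (PsiK A B₂ C₂ s.2.1 s.2.2.1 s.2.2.2.1 s.2.2.2.2.2, s.1, PsiP s.2.2.1 s.2.2.2.1 s.2.2.2.2.2,
    s.2.2.2.2.1)

theorem mapsTo_lqgParam :
    Set.MapsTo (lqgParam A B₂ C₂) (LQGLiftedZero n m p r) (LQGCvxZeroTimesGL n m p r) := by
  rintro ⟨K, γ, P, Γ⟩ ⟨hK, hP, hΞ, hΓ⟩
  obtain ⟨X, Y, Ξ, rfl, hF, hΞ⟩ := exists_eq_psiP hP hΞ
  obtain ⟨hX, hZ⟩ := posDef_fromBlocks_one_iff.mp hF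
  obtain ⟨hXsymm, hYsymm⟩ := isSymm_of_posDef_fromBlocks hF
  have hXinv := (inv_psiP_toBlocks hX.isUnit hZ.isUnit hΞ).1
  dsimp only [lqgParam]
  rw [hXinv, psiP_toBlocks₁₁, psiP_toBlocks₁₂]
  exact ⟨(phiLam_toBlocks₁₁ A B₂ C₂ K _).trans hK, hXsymm, hYsymm, hF, hΓ, hΞ⟩

theorem mapsTo_lqgParamInv :
    Set.MapsTo (lqgParamInv A B₂ C₂) (LQGCvxZeroTimesGL n m p r) (LQGLiftedZero n m p r) := by
  rintro ⟨γ, Λ, X, Y, Γ, Ξ⟩ ⟨hΛ, -, -, hF, hΓ, hΞ⟩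
  obtain ⟨hX, hZ⟩ := posDef_fromBlocks_one_iff.mp hF
  dsimp only [lqgParamInv]
  refine ⟨?_, posDef_psiP hX hZ hΞ, hΞ, hΓ⟩
  rw [← phiLam_toBlocks₁₁ A B₂ C₂ _ (PsiP X Y Ξ),
    phiLam_psiK_psiP A B₂ C₂ hX.isUnit hZ.isUnit hΞ, hΛ]

theorem invOn_lqgParam :
    Set.InvOn (lqgParamInv A B₂ C₂) (lqgParam A B₂ C₂) (LQGLiftedZero n m p r)
      (LQGCvxZeroTimesGL n m p r) := by
  constructor
  · rintro ⟨K, γ, P, Γ⟩ ⟨-, hP, hΞ, -⟩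
    obtain ⟨X, Y, Ξ, rfl, hF, hΞ⟩ := exists_eq_psiP hP hΞ
    obtain ⟨hX, hZ⟩ := posDef_fromBlocks_one_iff.mp hF
    dsimp only [lqgParam, lqgParamInv]
    rw [(inv_psiP_toBlocks hX.isUnit hZ.isUnit hΞ).1, psiP_toBlocks₁₁, psiP_toBlocks₁₂,
      psiK_phiLam_psiP A B₂ C₂ hX.isUnit hZ.isUnit hΞ]
  · rintro ⟨γ, Λ, X, Y, Γ, Ξ⟩ ⟨-, -, -, hF, -, hΞ⟩
    obtain ⟨hX, hZ⟩ := posDef_fromBlocks_one_iff.mp hF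
    dsimp only [lqgParam, lqgParamInv]
    rw [(inv_psiP_toBlocks hX.isUnit hZ.isUnit hΞ).1, psiP_toBlocks₁₁, psiP_toBlocks₁₂,
      phiLam_psiK_psiP A B₂ C₂ hX.isUnit hZ.isUnit hΞ]

end Parameterization

/-- **Proposition 4.3, diffeomorphism part (bijectivity)**: the map
`Φ(K,γ,P,Γ) = (γ, Φ_Λ(K,P), (P⁻¹)₁₁, P₁₁, Γ, P₁₂)` is a bijection from `L⁰`
onto `F⁰ × GLₙ(ℝ)`, with inverse
`(γ,Λ,X,Y,Γ,Ξ) ↦ (Ψ_K(Λ,X,Y,Ξ), γ, Ψ_P(X,Y,Ξ), Γ)`. -/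
theorem lqg_parameterization_bijOn {n m p r : ℕ}
    (A : Matrix (Fin n) (Fin n) ℝ) (B₂ : Matrix (Fin n) (Fin m) ℝ)
    (C₂ : Matrix (Fin p) (Fin n) ℝ) :
    Set.BijOn
      (fun t : Matrix (Fin m ⊕ Fin n) (Fin p ⊕ Fin n) ℝ × ℝ ×
          Matrix (Fin n ⊕ Fin n) (Fin n ⊕ Fin n) ℝ × Matrix (Fin r) (Fin r) ℝ =>
        (t.2.1, PhiLam A B₂ C₂ t.1 t.2.2.1, (t.2.2.1⁻¹).toBlocks₁₁,
          t.2.2.1.toBlocks₁₁, t.2.2.2, t.2.2.1.toBlocks₁₂))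
      (LQGLiftedZero n m p r) (LQGCvxZeroTimesGL n m p r) ∧
    Set.InvOn
      (fun s : ℝ × Matrix (Fin m ⊕ Fin n) (Fin p ⊕ Fin n) ℝ ×
          Matrix (Fin n) (Fin n) ℝ × Matrix (Fin n) (Fin n) ℝ ×
          Matrix (Fin r) (Fin r) ℝ × Matrix (Fin n) (Fin n) ℝ =>
        (PsiK A B₂ C₂ s.2.1 s.2.2.1 s.2.2.2.1 s.2.2.2.2.2, s.1,
          PsiP s.2.2.1 s.2.2.2.1 s.2.2.2.2.2, s.2.2.2.2.1))
      (fun t : Matrix (Fin m ⊕ Fin n) (Fin p ⊕ Fin n) ℝ × ℝ ×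
          Matrix (Fin n ⊕ Fin n) (Fin n ⊕ Fin n) ℝ × Matrix (Fin r) (Fin r) ℝ =>
        (t.2.1, PhiLam A B₂ C₂ t.1 t.2.2.1, (t.2.2.1⁻¹).toBlocks₁₁,
          t.2.2.1.toBlocks₁₁, t.2.2.2, t.2.2.1.toBlocks₁₂))
      (LQGLiftedZero n m p r) (LQGCvxZeroTimesGL n m p r) :=
  ⟨(invOn_lqgParam A B₂ C₂).bijOn (mapsTo_lqgParam A B₂ C₂) (mapsTo_lqgParamInv A B₂ C₂),
    invOn_lqgParam A B₂ C₂⟩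
end
end
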